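/- Fix ε ∈ (0,1) and let Y be a real-valued random variable. Let Y₁, ..., Y_K be i.i.d. copies of Y and set ξ* = max(|Y₁|, ..., |Y_K|). Then the probability (with respect to the K-fold product measure) of the event {P(|Y| > ξ*) > ε} is at most (1-ε)^K. -/

import Mathlib

/-!
The event only depends on whether the maximum `max |Yᵢ|` lies in the lower set
`T = {t | ε < P(|Y| > t)}`, i.e. on whether every `|Yᵢ|` lies in `T`, so its probability is
`P(|Y| ∈ T) ^ K`. As a lower set of `ℝ`, `T` is the directed union of the intervals `(-∞, t]`,
`t ∈ T`, each of which has probability `1 - P(|Y| > t) ≤ 1 - ε`; hence `P(|Y| ∈ T) ≤ 1 - ε`.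
-/

open MeasureTheory Set ENNReal

theorem IsLowerSet.finset_sup'_mem_iff {α ι : Type*} [LinearOrder α] {T : Set α}
    (hT : IsLowerSet T) {s : Finset ι} (hs : s.Nonempty) {f : ι → α} :
    s.sup' hs f ∈ T ↔ ∀ i ∈ s, f i ∈ T := by
  refine ⟨fun h i hi => hT (Finset.le_sup' f hi) h, fun h => ?_⟩
  obtain ⟨i, hi, hsup⟩ := Finset.exists_mem_eq_sup' hs f
  exact hsup ▸ h i hi

theorem isLowerSet_setOf_lt_measure_Ioi {α : Type*} [Preorder α] [MeasurableSpace α]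
    {ν : Measure α} (c : ℝ≥0∞) : IsLowerSet {t | c < ν (Ioi t)} :=
  fun _ _ hts hs => hs.trans_le (measure_mono (Ioi_subset_Ioi hts))

section LowerSet

variable {α : Type*} [ConditionallyCompleteLinearOrder α] [TopologicalSpace α] [OrderTopology α]
  [SecondCountableTopology α] [MeasurableSpace α] {ν : Measure α}

theorem IsLowerSet.measure_le_of_forall_measure_Iic_le {T : Set α} (hT : IsLowerSet T)
    {c : ℝ≥0∞} (h : ∀ t ∈ T, ν (Iic t) ≤ c) : ν T ≤ c := by
  -- continuity from below applies to this uncountable union since `atTop` on the subtype `T` is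
  -- countably generated: an order-connected subset carries the order topology
  have : T.OrdConnected := hT.ordConnected
  have hunion : T = ⋃ t : T, Iic (t : α) :=
    Subset.antisymm (fun x hx => mem_iUnion.2 ⟨⟨x, hx⟩, self_mem_Iic⟩)
      (iUnion_subset fun t _ hx => hT hx t.2)
  rw [hunion, Monotone.measure_iUnion (s := fun t : T => Iic (t : α))
    fun _ _ hst => Iic_subset_Iic.2 hst]
  exact iSup_le fun t => h t t.2

theorem measure_setOf_lt_measure_Ioi_le [OpensMeasurableSpace α] [IsFiniteMeasure ν]
    (c : ℝ≥0∞) : ν {t | c < ν (Ioi t)} ≤ ν univ - c := by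
  refine (isLowerSet_setOf_lt_measure_Ioi c).measure_le_of_forall_measure_Iic_le fun t ht => ?_
  rw [← compl_Ioi, measure_compl measurableSet_Ioi (measure_ne_top ν _)]
  exact tsub_le_tsub_left ht.le _

end LowerSet

theorem stmt_8 (ε : ℝ) (hε : ε ∈ Set.Ioo (0 : ℝ) 1) (K : ℕ) [NeZero K]
    (μ : Measure ℝ) [IsProbabilityMeasure μ] :
    Measure.pi (fun _ : Fin K => μ)
      {ω : Fin K → ℝ |
        ENNReal.ofReal ε <
          μ {x : ℝ | (Finset.univ.sup' Finset.univ_nonempty fun i : Fin K => |ω i|) < |x|}}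
      ≤ ENNReal.ofReal ((1 - ε) ^ K) := by
  set ν := μ.map (|·|)
  have : IsProbabilityMeasure ν := Measure.isProbabilityMeasure_map measurable_abs.aemeasurable
  set T := {t : ℝ | ENNReal.ofReal ε < ν (Ioi t)}
  have hT : IsLowerSet T := isLowerSet_setOf_lt_measure_Ioi _
  have htail (t : ℝ) : μ {x : ℝ | t < |x|} = ν (Ioi t) :=
    (Measure.map_apply measurable_abs measurableSet_Ioi).symm
  have hevent : {ω : Fin K → ℝ | ENNReal.ofReal ε <
      μ {x : ℝ | (Finset.univ.sup' Finset.univ_nonempty fun i : Fin K => |ω i|) < |x|}} =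
      univ.pi fun _ => (|·|) ⁻¹' T := by
    ext ω
    simp only [htail, mem_ofPred_eq, mem_univ_pi, mem_preimage]
    exact hT.finset_sup'_mem_iff _ |>.trans (by simp [T])
  calc Measure.pi (fun _ : Fin K => μ) _ = ν T ^ K := by
        rw [hevent, Measure.pi_pi, Measure.map_apply measurable_abs hT.ordConnected.measurableSet]
        simp
    _ ≤ (1 - ENNReal.ofReal ε) ^ K := by
        gcongr
        simpa using measure_setOf_lt_measure_Ioi_le (ν := ν) (ENNReal.ofReal ε)
    _ = ENNReal.ofReal ((1 - ε) ^ K) := by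
        rw [ENNReal.ofReal_pow (by linarith [hε.2]), ENNReal.ofReal_sub _ hε.1.le,
          ENNReal.ofReal_one]
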